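/- arXiv:2207.06495 — 2 statements merged into one kernel-verified Lean document; each statement's English description precedes it below -/
import Mathlib

section
/- Let H be an (mT) × M matrix over GF(2) such that every set of 2T columns of H is linearly independent. Viewing columns as vectors in ℝ^{mT} with entries in {0,1}, if S and S' are two sets of at most T columns each with the same real (coordinatewise) sum, then S = S'. -/
/-- BPR zero-error property: if any `2T` columns of the binary matrix `H` are linearly
independent over GF(2), then two sets of at most `T` columns with the same real sum
(entries viewed as `{0,1} ⊂ ℝ`) coincide. -/
theorem bpr_sum_injective (m T M : ℕ) (hT : 1 ≤ T)
    (H : Matrix (Fin (m * T)) (Fin M) (ZMod 2))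
    (hind : ∀ s : Finset (Fin M), s.card ≤ 2 * T →
      LinearIndependent (ZMod 2) (fun j : s => fun i => H i (j : Fin M)))
    (S S' : Finset (Fin M)) (hS : S.card ≤ T) (hS' : S'.card ≤ T)
    (hsum : ∀ i : Fin (m * T),
      (∑ j ∈ S, ((H i j).val : ℝ)) = ∑ j ∈ S', ((H i j).val : ℝ)) :
    S = S' := by
  -- equal sums over ℕ
  have hnat : ∀ i : Fin (m * T),
      (∑ j ∈ S, (H i j).val) = ∑ j ∈ S', (H i j).val := by
    intro i
    have := hsum i
    exact_mod_cast this
  -- equal sums over ZMod 2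
  have hz : ∀ i : Fin (m * T), (∑ j ∈ S, H i j) = ∑ j ∈ S', H i j := by
    intro i
    have : ((∑ j ∈ S, (H i j).val : ℕ) : ZMod 2)
        = ((∑ j ∈ S', (H i j).val : ℕ) : ZMod 2) := by rw [hnat i]
    simpa [Nat.cast_sum, ZMod.natCast_val, ZMod.cast_id] using this
  -- symmetric difference
  set D : Finset (Fin M) := (S \ S') ∪ (S' \ S) with hD
  have hdisj : Disjoint (S \ S') (S' \ S) := disjoint_sdiff_sdiff
  have hsub : ∀ i : Fin (m * T), (∑ j ∈ S \ S', H i j) = ∑ j ∈ S' \ S, H i j := by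
    intro i
    have h1 : (∑ j ∈ S, H i j) = (∑ j ∈ S ∩ S', H i j) + ∑ j ∈ S \ S', H i j :=
      (Finset.sum_inter_add_sum_sdiff S S' (fun j => H i j)).symm
    have h2 : (∑ j ∈ S', H i j) = (∑ j ∈ S ∩ S', H i j) + ∑ j ∈ S' \ S, H i j := by
      rw [Finset.inter_comm]
      exact (Finset.sum_inter_add_sum_sdiff S' S (fun j => H i j)).symm
    have := hz i
    rw [h1, h2] at this
    exact add_left_cancel this
  have hDzero : ∀ i : Fin (m * T), (∑ j ∈ D, H i j) = 0 := by
    intro i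
    rw [hD, Finset.sum_union hdisj, hsub i]
    have : (2 : ZMod 2) = 0 := rfl
    rw [← two_mul, this, zero_mul]
  -- cardinality bound
  have hcard : D.card ≤ 2 * T := by
    calc D.card ≤ (S \ S').card + (S' \ S).card := Finset.card_union_le _ _
      _ ≤ S.card + S'.card :=
        Nat.add_le_add (Finset.card_le_card (Finset.sdiff_subset))
          (Finset.card_le_card (Finset.sdiff_subset))
      _ ≤ 2 * T := by omega
  have hli := hind D hcard
  -- D is empty
  have hDempty : D = ∅ := by
    by_contra hne
    obtain ⟨j, hj⟩ := Finset.nonempty_iff_ne_empty.mpr hne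
    have := Fintype.linearIndependent_iff.mp hli (fun _ => (1 : ZMod 2)) ?_ ⟨j, hj⟩
    · exact one_ne_zero this
    · funext i
      have h := hDzero i
      rw [← Finset.sum_attach D (fun j => H i j)] at h
      simpa using h
  -- conclude
  have h1 : S \ S' = ∅ := by
    rw [hD, Finset.union_eq_empty] at hDempty
    exact hDempty.1
  have h2 : S' \ S = ∅ := by
    rw [hD, Finset.union_eq_empty] at hDempty
    exact hDempty.2
  exact Finset.Subset.antisymm (Finset.sdiff_eq_empty_iff_subset.mp h1)
    (Finset.sdiff_eq_empty_iff_subset.mp h2)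
end

section
/- Let H be an (mT) × M binary matrix whose columns all differ and in which every 2T columns are linearly independent over GF(2). Suppose y ∈ ℝ^{mT} equals the real sum of the columns indexed by an unknown set S with |S| ≤ T. Then S is uniquely determined by y and the function mapping y to S is well-defined (zero-error decoding). -/
/-- Zero-error decoding on the K-choose-T binary adder channel with BPR codebooks:
if the columns of `H` are distinct and any `2T` of them are linearly independent over GF(2),
then the set `S` (with `|S| ≤ T`) of transmitted columns is uniquely determined by the real
sum `y`, and a decoding function recovering `S` from `y` exists. -/
theorem bpr_zero_error_decoder (m T M : ℕ) (hT : 1 ≤ T)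
    (H : Matrix (Fin (m * T)) (Fin M) (ZMod 2))
    (hdist : Function.Injective (fun j : Fin M => fun i => H i j))
    (hind : ∀ s : Finset (Fin M), s.card ≤ 2 * T →
      LinearIndependent (ZMod 2) (fun j : s => fun i => H i (j : Fin M))) :
    (∀ S S' : Finset (Fin M), S.card ≤ T → S'.card ≤ T →
      (fun i : Fin (m * T) => ∑ j ∈ S, ((H i j).val : ℝ)) =
        (fun i => ∑ j ∈ S', ((H i j).val : ℝ)) → S = S') ∧
    ∃ dec : (Fin (m * T) → ℝ) → Finset (Fin M),
      ∀ S : Finset (Fin M), S.card ≤ T →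
        dec (fun i => ∑ j ∈ S, ((H i j).val : ℝ)) = S := by
  have uniq : ∀ S S' : Finset (Fin M), S.card ≤ T → S'.card ≤ T →
      (fun i : Fin (m * T) => ∑ j ∈ S, ((H i j).val : ℝ)) =
        (fun i => ∑ j ∈ S', ((H i j).val : ℝ)) → S = S' := by
    intro S S' hS hS' heq
    -- mod-2 equality of column sums
    have hmod : ∀ i, (∑ j ∈ S, H i j) = ∑ j ∈ S', H i j := by
      intro i
      have h1 : (∑ j ∈ S, ((H i j).val : ℝ)) = ∑ j ∈ S', ((H i j).val : ℝ) :=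
        congrFun heq i
      have h2 : (∑ j ∈ S, (H i j).val) = ∑ j ∈ S', (H i j).val := by
        exact_mod_cast h1
      have : ((∑ j ∈ S, (H i j).val : ℕ) : ZMod 2) = ((∑ j ∈ S', (H i j).val : ℕ) : ZMod 2) := by
        rw [h2]
      simpa [Nat.cast_sum, ZMod.natCast_val, ZMod.cast_id] using this
    -- the symmetric difference
    set s : Finset (Fin M) := (S \ S') ∪ (S' \ S) with hs
    have hdisj : Disjoint (S \ S') (S' \ S) :=
      disjoint_sdiff_sdiff
    have hcard : s.card ≤ 2 * T := by
      rw [hs]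
      have := Finset.card_union_le (S \ S') (S' \ S)
      have h1 : (S \ S').card ≤ T := le_trans (Finset.card_le_card (Finset.sdiff_subset)) hS
      have h2 : (S' \ S).card ≤ T := le_trans (Finset.card_le_card (Finset.sdiff_subset)) hS'
      omega
    have hsum0 : (∑ j ∈ s, fun i => H i j) = (0 : Fin (m * T) → ZMod 2) := by
      funext i
      have hsplit : ∀ A B : Finset (Fin M),
          (∑ j ∈ A, H i j) = (∑ j ∈ A \ B, H i j) + ∑ j ∈ A ∩ B, H i j := by
        intro A B
        rw [← Finset.sum_union (Finset.disjoint_sdiff_inter A B),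
          Finset.sdiff_union_inter]
      have h1 := hsplit S S'
      have h2 := hsplit S' S
      rw [Finset.inter_comm] at h2
      have hdiff : (∑ j ∈ S \ S', H i j) = ∑ j ∈ S' \ S, H i j := by
        have := hmod i
        rw [h1, h2] at this
        exact add_right_cancel this
      have : (∑ j ∈ s, H i j) = (∑ j ∈ S \ S', H i j) + ∑ j ∈ S' \ S, H i j := by
        rw [hs, Finset.sum_union hdisj]
      rw [Finset.sum_apply]
      rw [this, hdiff]
      exact CharTwo.add_self_eq_zero _
    have hempty : s = ∅ := by
      by_contra hne
      obtain ⟨j0, hj0⟩ := Finset.nonempty_iff_ne_empty.mpr hne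
      have hli := hind s hcard
      rw [Fintype.linearIndependent_iff] at hli
      have := hli (fun _ => 1) ?_ ⟨j0, hj0⟩
      · exact one_ne_zero this
      · have : (∑ j : s, (1 : ZMod 2) • fun i => H i (j : Fin M))
            = ∑ j ∈ s, fun i => H i j := by
          simp [Finset.sum_attach s (fun j => fun i => H i j)]
        rw [this, hsum0]
    rw [hs, Finset.union_eq_empty] at hempty
    exact Finset.Subset.antisymm
      (Finset.sdiff_eq_empty_iff_subset.mp hempty.1)
      (Finset.sdiff_eq_empty_iff_subset.mp hempty.2)
  refine ⟨uniq, ?_⟩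
  classical
  refine ⟨fun y =>
    if h : ∃ S : Finset (Fin M), S.card ≤ T ∧
        (fun i : Fin (m * T) => ∑ j ∈ S, ((H i j).val : ℝ)) = y
    then h.choose else ∅, ?_⟩
  intro S hS
  have hex : ∃ S' : Finset (Fin M), S'.card ≤ T ∧
      (fun i : Fin (m * T) => ∑ j ∈ S', ((H i j).val : ℝ)) =
        (fun i : Fin (m * T) => ∑ j ∈ S, ((H i j).val : ℝ)) := ⟨S, hS, rfl⟩
  beta_reduce
  rw [dif_pos hex]
  exact uniq _ _ hex.choose_spec.1 hS hex.choose_spec.2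
end
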